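/- arXiv:1511.01961 — 4 statements merged into one kernel-verified Lean document; each statement's English description precedes it below -/
import Mathlib

section
/- Let 1 ≤ k ≤ m with k = m or k odd, and let a, b ∈ B^{n-k,k} be cup diagrams with S_a ∩ S_b ≠ ∅. Then S_a ∩ S_b (with the subspace topology from (S²)^m) is homeomorphic to (S²)^circ, where circ is the number of closed connected components of the circle diagram graph of a and b. -/
noncomputable section
namespace Spr

/-! ### Linear algebra setup -/

abbrev Vsp (N : ℕ) := EuclideanSpace ℂ (Fin (2*N))
abbrev C2 := EuclideanSpace ℂ (Fin 2)

/-- The basis vector `e_i` (1-based index). -/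
def eVec (N i : ℕ) : Vsp N :=
  if h : 1 ≤ i ∧ i ≤ N then EuclideanSpace.single (⟨i-1, by omega⟩ : Fin (2*N)) 1 else 0

/-- The basis vector `f_i` (1-based index). -/
def fVec (N i : ℕ) : Vsp N :=
  if h : 1 ≤ i ∧ i ≤ N then EuclideanSpace.single (⟨N+i-1, by omega⟩ : Fin (2*N)) 1 else 0

/-- The standard basis vector `e` of `ℂ²`. -/
def eStd : C2 := EuclideanSpace.single 0 1
/-- The standard basis vector `f` of `ℂ²`. -/
def fStd : C2 := EuclideanSpace.single 1 1

/-- The nilpotent endomorphism `z` with two equal Jordan blocks: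
`z e_1 = 0 = z f_1`, `z e_{i+1} = e_i`, `z f_{i+1} = f_i`. -/
def zMap (N : ℕ) : Vsp N →ₗ[ℂ] Vsp N where
  toFun v := WithLp.toLp 2 (fun j : Fin (2*N) => if h : j.val + 1 < 2*N ∧ j.val + 1 ≠ N then v ⟨j.val+1, h.1⟩ else 0)
  map_add' v w := by
    ext j
    by_cases h : j.val + 1 < 2*N ∧ j.val + 1 ≠ N <;> simp [h, PiLp.add_apply]
  map_smul' c v := by
    ext j
    by_cases h : j.val + 1 < 2*N ∧ j.val + 1 ≠ N <;> simp [h, PiLp.smul_apply]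

def cIdx (N : ℕ) (j : Fin 2) (i : Fin N) : Fin (2*N) :=
  ⟨if j.val = 0 then i.val else N + i.val, by have := i.isLt; split <;> omega⟩

/-- The linear map `C : ℂ^{2N} → ℂ²`, `e_i ↦ e`, `f_i ↦ f`. -/
def Cmap (N : ℕ) : Vsp N →ₗ[ℂ] C2 where
  toFun v := WithLp.toLp 2 (fun j => ∑ i : Fin N, v (cIdx N j i))
  map_add' v w := by
    ext j
    simp [PiLp.add_apply, Finset.sum_add_distrib]
  map_smul' c v := by
    ext j
    simp [PiLp.smul_apply, Finset.mul_sum]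

/-- The subspace `E_{a,b} = span(e_1,…,e_a,f_1,…,f_b)`. -/
def Esub (N a b : ℕ) : Submodule ℂ (Vsp N) :=
  Submodule.span ℂ ((eVec N '' Set.Icc 1 a) ∪ (fVec N '' Set.Icc 1 b))

/-- Gram coefficients of the symmetric bilinear form `β_D^{2m-k,k}`. -/
def cD (N m k : ℕ) (p q : Fin (2*N)) : ℂ :=
  if k = m then
    (if p.val < N ∧ N ≤ q.val then
      (if (p.val + 1) + (q.val - N + 1) = k + 1 then (-1:ℂ)^(q.val - N) else 0)
    else if N ≤ p.val ∧ q.val < N then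
      (if (p.val - N + 1) + (q.val + 1) = k + 1 then (-1:ℂ)^(p.val - N) else 0)
    else 0)
  else
    (if p.val < N ∧ q.val < N then
      (if (p.val + 1) + (q.val + 1) = 2*m - k + 1 then (-1:ℂ)^(p.val) else 0)
    else if N ≤ p.val ∧ N ≤ q.val then
      (if (p.val - N + 1) + (q.val - N + 1) = k + 1 then (-1:ℂ)^(p.val - N + 1) else 0)
    else 0)

/-- Gram coefficients of the symplectic bilinear form `β_C^{2m-k-1,k-1}`. -/
def cC (N m k : ℕ) (p q : Fin (2*N)) : ℂ :=
  if k = m then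
    (if N ≤ p.val ∧ q.val < N then
      (if (p.val - N + 1) + (q.val + 1) = k then (-1:ℂ)^(p.val - N) else 0)
    else if p.val < N ∧ N ≤ q.val then
      (if (p.val + 1) + (q.val - N + 1) = k then -(-1:ℂ)^(q.val - N) else 0)
    else 0)
  else
    (if p.val < N ∧ q.val < N then
      (if (p.val + 1) + (q.val + 1) = 2*m - k ∧ p.val < q.val then (-1:ℂ)^(p.val + 1)
       else if (p.val + 1) + (q.val + 1) = 2*m - k ∧ q.val < p.val then (-1:ℂ)^(p.val)
       else 0)
    else if N ≤ p.val ∧ N ≤ q.val then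
      (if (p.val - N + 1) + (q.val - N + 1) = k ∧ p.val < q.val then (-1:ℂ)^(p.val - N)
       else if (p.val - N + 1) + (q.val - N + 1) = k ∧ q.val < p.val then (-1:ℂ)^(p.val - N + 1)
       else 0)
    else 0)

/-- The bilinear pairing associated to a matrix `c` of coefficients. -/
def bFormFun (N : ℕ) (c : Fin (2*N) → Fin (2*N) → ℂ) (v w : Vsp N) : ℂ :=
  ∑ p : Fin (2*N), ∑ q : Fin (2*N), v p * (c p q * w q)

/-- The symmetric bilinear form `β_D^{2m-k,k}` (extended by zero to all of `ℂ^{2N}`). -/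
def betaD (N m k : ℕ) : Vsp N → Vsp N → ℂ := bFormFun N (cD N m k)

/-- The symplectic bilinear form `β_C^{2m-k-1,k-1}` (extended by zero to all of `ℂ^{2N}`). -/
def betaC (N m k : ℕ) : Vsp N → Vsp N → ℂ := bFormFun N (cC N m k)

/-- A subspace is isotropic with respect to a bilinear form. -/
def IsIsotropic {N : ℕ} (B : Vsp N → Vsp N → ℂ) (W : Submodule ℂ (Vsp N)) : Prop :=
  ∀ v ∈ W, ∀ w ∈ W, B v w = 0

lemma bFormFun_add_left {N : ℕ} (c : Fin (2*N) → Fin (2*N) → ℂ) (v v' w : Vsp N) :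
    bFormFun N c (v + v') w = bFormFun N c v w + bFormFun N c v' w := by
  simp [bFormFun, PiLp.add_apply, add_mul, Finset.sum_add_distrib]

lemma bFormFun_smul_left {N : ℕ} (c : Fin (2*N) → Fin (2*N) → ℂ) (s : ℂ) (v w : Vsp N) :
    bFormFun N c (s • v) w = s * bFormFun N c v w := by
  simp [bFormFun, PiLp.smul_apply, smul_eq_mul, mul_assoc, Finset.mul_sum]

lemma bFormFun_zero_left {N : ℕ} (c : Fin (2*N) → Fin (2*N) → ℂ) (w : Vsp N) :
    bFormFun N c 0 w = 0 := by
  simp [bFormFun]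

/-- `{v ∈ E | ∀ w ∈ F, B(v,w) = 0}` for the bilinear form with coefficients `c`. -/
def perpB (N : ℕ) (c : Fin (2*N) → Fin (2*N) → ℂ) (E F : Submodule ℂ (Vsp N)) :
    Submodule ℂ (Vsp N) where
  carrier := {v | v ∈ E ∧ ∀ w ∈ F, bFormFun N c v w = 0}
  add_mem' := by
    rintro x y ⟨hxE, hx⟩ ⟨hyE, hy⟩
    exact ⟨E.add_mem hxE hyE, fun w hw => by
      rw [bFormFun_add_left, hx w hw, hy w hw, add_zero]⟩
  zero_mem' := ⟨E.zero_mem, fun w hw => bFormFun_zero_left c w⟩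
  smul_mem' := by
    rintro s x ⟨hxE, hx⟩
    exact ⟨E.smul_mem s hxE, fun w hw => by
      rw [bFormFun_smul_left, hx w hw, mul_zero]⟩

/-- `F^{⊥_D}`, the orthogonal of `F` inside `E_{2m-k,k}` with respect to `β_D`. -/
def perpD (N m k : ℕ) (F : Submodule ℂ (Vsp N)) : Submodule ℂ (Vsp N) :=
  perpB N (cD N m k) (Esub N (2*m-k) k) F

/-- `F^{⊥_C}`, the orthogonal of `F` inside `E_{2m-k-1,k-1}` with respect to `β_C`. -/
def perpC (N m k : ℕ) (F : Submodule ℂ (Vsp N)) : Submodule ℂ (Vsp N) :=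
  perpB N (cC N m k) (Esub N (2*m-k-1) (k-1)) F

/-- Membership in the Cautis–Kamnitzer variety `Y`: a flag `F_0 ⊆ F_1 ⊆ … ⊆ F_{len-1}` with
`F_0 = 0`, `dim F_i = i`, and `z F_i ⊆ F_{i-1}`. -/
def InY (N len : ℕ) (F : Fin len → Submodule ℂ (Vsp N)) : Prop :=
  (∀ i : Fin len, i.val = 0 → F i = ⊥) ∧
  ∀ i j : Fin len, j.val = i.val + 1 →
    Module.finrank ℂ ↥(F j) = j.val ∧ F i ≤ F j ∧
      Submodule.map (zMap N) (F j) ≤ F i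

/-- Membership in the embedded type `D` Springer fiber `Fl^{2m-k,k}_D ⊆ Y_m`. -/
def InFlD (N m k : ℕ) (F : Fin (m+1) → Submodule ℂ (Vsp N)) : Prop :=
  InY N (m+1) F ∧ F (Fin.last m) ≤ Esub N (2*m-k) k ∧
    IsIsotropic (betaD N m k) (F (Fin.last m))

/-- Membership in the embedded type `C` Springer fiber `Fl^{2m-k-1,k-1}_C ⊆ Y_{m-1}`;
here `G : Fin m → _` is the flag `(G_0,…,G_{m-1})`. -/
def InFlC (N m k : ℕ) (G : Fin m → Submodule ℂ (Vsp N)) : Prop :=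
  InY N m G ∧ ∀ i : Fin m, i.val = m - 1 →
    G i ≤ Esub N (2*m-k-1) (k-1) ∧ IsIsotropic (betaC N m k) (G i)

/-! ### Cup diagrams -/

/-- A (dotted) cup diagram on the vertices `{1,…,m}`. -/
structure CupDiagram (m : ℕ) where
  cups : Finset (ℕ × ℕ)
  dottedCups : Finset (ℕ × ℕ)
  dottedRays : Finset ℕ
  cups_valid : ∀ p ∈ cups, 1 ≤ p.1 ∧ p.1 < p.2 ∧ p.2 ≤ m
  cups_disjoint : ∀ p ∈ cups, ∀ q ∈ cups, p ≠ q →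
    p.1 ≠ q.1 ∧ p.1 ≠ q.2 ∧ p.2 ≠ q.1 ∧ p.2 ≠ q.2
  noncrossing : ∀ p ∈ cups, ∀ l, p.1 < l → l < p.2 →
    ∃ q ∈ cups, (l = q.1 ∨ l = q.2) ∧ p.1 < q.1 ∧ q.2 < p.2
  dottedCups_sub : dottedCups ⊆ cups
  dottedRays_valid : ∀ r ∈ dottedRays, 1 ≤ r ∧ r ≤ m ∧ ∀ p ∈ cups, r ≠ p.1 ∧ r ≠ p.2
  dottedCups_cond : ∀ p ∈ dottedCups,
    (∀ q ∈ cups, ¬(q.1 < p.1 ∧ p.2 < q.2)) ∧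
    (∀ r, p.2 < r → r ≤ m → ∃ q ∈ cups, r = q.1 ∨ r = q.2)
  dottedRays_cond : ∀ r ∈ dottedRays, ∀ r', r < r' → r' ≤ m →
    ∃ q ∈ cups, r' = q.1 ∨ r' = q.2

/-- The vertex `v` carries a ray of the cup diagram `a`. -/
def CupDiagram.HasRay {m : ℕ} (a : CupDiagram m) (v : ℕ) : Prop :=
  1 ≤ v ∧ v ≤ m ∧ ∀ p ∈ a.cups, v ≠ p.1 ∧ v ≠ p.2

/-- The total number of dots of a cup diagram. -/
def CupDiagram.dots {m : ℕ} (a : CupDiagram m) : ℕ :=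
  a.dottedCups.card + a.dottedRays.card

/-! ### The sets `T_a ⊆ (ℙ¹)^m` -/

/-- The subset `T_a ⊆ (ℙ¹)^m` attached to a cup diagram `a ∈ B^{2m-k,k}`
(tuples are `0`-indexed: the coordinate `l i` corresponds to the vertex `i+1`). -/
def Ta (m k : ℕ) (a : CupDiagram m) : Set (Fin m → Submodule ℂ C2) :=
  {l | (∀ i : Fin m, Module.finrank ℂ ↥(l i) = 1) ∧
       (∀ i j : Fin m, (i.val+1, j.val+1) ∈ a.cups → (i.val+1, j.val+1) ∉ a.dottedCups →
          l j = (l i)ᗮ) ∧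
       (∀ i j : Fin m, (i.val+1, j.val+1) ∈ a.dottedCups → l i = l j) ∧
       (if k = m then
          ∀ i : Fin m, a.HasRay (i.val+1) →
            (i.val+1 ∉ a.dottedRays → l i = Submodule.span ℂ {fStd}) ∧
            (i.val+1 ∈ a.dottedRays → l i = Submodule.span ℂ {eStd})
        else
          ∀ i : Fin m, a.HasRay (i.val+1) →
            ((∃ r, a.HasRay r ∧ i.val+1 < r) → l i = Submodule.span ℂ {eStd}) ∧
            ((∀ r, a.HasRay r → r ≤ i.val+1) →
              l i = Submodule.span ℂ
                {(if (m-k) % 2 = 0 then (1:ℂ) else Complex.I) • eStd +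
                 (if i.val+1 ∈ a.dottedRays then (1:ℂ) else (-1:ℂ)) • fStd}))}

/-- The compatibility `C(F_{i} ∩ F_{i-1}^⊥) = l_i` for all `1 ≤ i ≤ m`. -/
def Compat (N m : ℕ) (F : Fin (m+1) → Submodule ℂ (Vsp N))
    (l : Fin m → Submodule ℂ C2) : Prop :=
  ∀ i : Fin m, Submodule.map (Cmap N) (F i.succ ⊓ (F i.castSucc)ᗮ) = l i

/-! ### Spheres and the topological Springer fiber -/

abbrev E3 := EuclideanSpace ℝ (Fin 3)
abbrev Sph : Type := ↥(Metric.sphere (0 : E3) 1)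

/-- The point `p = (0,0,1)`. -/
def pPt : E3 := EuclideanSpace.single 2 1
/-- The point `q = (1,0,0)`. -/
def qPt : E3 := EuclideanSpace.single 0 1

/-- The submanifold `S_a ⊆ (S²)^m` attached to a cup diagram `a`
(tuples are `0`-indexed: the coordinate `x i` corresponds to the vertex `i+1`). -/
def Sa (m : ℕ) (a : CupDiagram m) : Set (Fin m → Sph) :=
  {x | (∀ i j : Fin m, (i.val+1, j.val+1) ∈ a.cups →
          ((i.val+1, j.val+1) ∉ a.dottedCups → (x i : E3) = -(x j : E3)) ∧
          ((i.val+1, j.val+1) ∈ a.dottedCups → (x i : E3) = (x j : E3))) ∧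
       (∀ i : Fin m, a.HasRay (i.val+1) →
          (i.val+1 ∈ a.dottedRays → (x i : E3) = pPt) ∧
          (i.val+1 ∉ a.dottedRays →
            ((∀ r, a.HasRay r → r ≤ i.val+1) → (x i : E3) = -pPt) ∧
            ((∃ r, a.HasRay r ∧ i.val+1 < r) → (x i : E3) = qPt)))}

/-! ### Circle diagrams -/

/-- The edge relation of the circle diagram `\bar a b`. -/
def EdgeRel (m : ℕ) (a b : CupDiagram m) (i j : ℕ) : Prop :=
  (i, j) ∈ a.cups ∨ (j, i) ∈ a.cups ∨ (i, j) ∈ b.cups ∨ (j, i) ∈ b.cups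

/-- Two vertices lie in the same connected component of the circle diagram. -/
def Reach (m : ℕ) (a b : CupDiagram m) : ℕ → ℕ → Prop :=
  Relation.ReflTransGen (EdgeRel m a b)

/-- The number of dots on the connected component of the vertex `v` in the
circle diagram `\bar a b`. -/
def compDots (m : ℕ) (a b : CupDiagram m) (v : ℕ) : ℕ :=
  {p : ℕ × ℕ | p ∈ a.dottedCups ∧ Reach m a b v p.1 ∧ Reach m a b v p.2}.ncard +
  {p : ℕ × ℕ | p ∈ b.dottedCups ∧ Reach m a b v p.1 ∧ Reach m a b v p.2}.ncard +
  {r : ℕ | r ∈ a.dottedRays ∧ Reach m a b v r}.ncard +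
  {r : ℕ | r ∈ b.dottedRays ∧ Reach m a b v r}.ncard

/-- The connected component of `v` in the circle diagram is closed, i.e. none of
its vertices carries a ray of `a` or of `b`. -/
def IsClosedCompAt (m : ℕ) (a b : CupDiagram m) (v : ℕ) : Prop :=
  ∀ w, Reach m a b v w → ¬ a.HasRay w ∧ ¬ b.HasRay w

/-- The number of closed connected components of the circle diagram `\bar a b`. -/
def numClosed (m : ℕ) (a b : CupDiagram m) : ℕ :=
  {s : Set ℕ | ∃ v, 1 ≤ v ∧ v ≤ m ∧ IsClosedCompAt m a b v ∧
      s = {w | Reach m a b v w}}.ncard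

/-! ### The diffeomorphism `γ_{n-k,k}` -/

/-- Stereographic projection `S² \ {p} → ℂ`. -/
def sigmaProj (v : E3) : ℂ :=
  Complex.ofReal (v 0 / (1 - v 2)) + Complex.I * Complex.ofReal (v 1 / (1 - v 2))

open scoped Classical in
/-- The map `γ : S² → ℙ¹` (extended to the ambient space `ℝ³`). -/
def gammaAmb (v : E3) : Submodule ℂ C2 :=
  if v = pPt then Submodule.span ℂ {eStd}
  else Submodule.span ℂ {sigmaProj v • eStd + fStd}

/-- The coordinate swap `s(x,y,z) = (x,z,y)`. -/
def sSwap (v : E3) : E3 := WithLp.toLp 2 (fun j : Fin 3 => v (if j.val = 1 then (2 : Fin 3) else if j.val = 2 then 1 else 0))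
/-- The coordinate swap `t(x,y,z) = (z,y,x)`. -/
def tSwap (v : E3) : E3 := WithLp.toLp 2 (fun j : Fin 3 => v (if j.val = 0 then (2 : Fin 3) else if j.val = 2 then 0 else 1))

/-- The diffeomorphism `γ_{n-k,k} : (S²)^m → (ℙ¹)^m`. -/
def gammaNK (m k : ℕ) (x : Fin m → Sph) : Fin m → Submodule ℂ C2 := fun i =>
  if k = m then gammaAmb (x i)
  else if (m - k) % 2 = 1 then gammaAmb (tSwap (x i))
  else gammaAmb (sSwap (x i))

/-! ### Jordan types and special simultaneous Jordan systems -/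

/-- The nilpotent endomorphism induced by `z` on the subquotient `W/F` has Jordan type
`(a,b)`, encoded via the dimensions of the kernels of its powers:
`dim ker((z̄)^j) = min(j,a) + min(j,b)` for all `j`. -/
def HasJordanTypeOn (N : ℕ) (W F : Submodule ℂ (Vsp N)) (a b : ℕ) : Prop :=
  ∀ j : ℕ, Module.finrank ℂ ↥(W ⊓ Submodule.comap (zMap N ^ j) F)
    = min j a + min j b + Module.finrank ℂ ↥F

/-- A special simultaneous Jordan system at level `i` for the subspace `Fi = F_i`
(Definition of Ehrig–Stroppel–Wilbert, Definition 4.4 of the paper). -/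
def SpecialSJS (N m k : ℕ) (Fi : Submodule ℂ (Vsp N)) (i : ℕ) (ev fv : ℕ → Vsp N) : Prop :=
  (∀ j, 1 ≤ j → j + 1 ≤ m - i → zMap N (ev (j+1)) = ev j ∧ zMap N (fv (j+1)) = fv j) ∧
  (zMap N (ev 1) ∈ Fi ∧ zMap N (fv 1) ∈ Fi) ∧
  (∀ j, 1 ≤ j → j ≤ m - i → ev j ∈ perpD N m k Fi ∧ fv j ∈ perpD N m k Fi) ∧
  (∀ j, 1 ≤ j → j ≤ m - i - 1 → ev j ∈ perpC N m k Fi ∧ fv j ∈ perpC N m k Fi) ∧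
  LinearIndependent ℂ (fun s : Fin (m-i) ⊕ Fin (m-i) =>
    (Submodule.Quotient.mk (Sum.elim (fun t => ev (t.val+1)) (fun t => fv (t.val+1)) s) :
      Vsp N ⧸ Fi)) ∧
  (perpD N m k Fi
     = Fi ⊔ Submodule.span ℂ ((ev '' Set.Icc 1 (m-i)) ∪ (fv '' Set.Icc 1 (m-i)))) ∧
  (perpC N m k Fi
     = Fi ⊔ Submodule.span ℂ ((ev '' Set.Icc 1 (m-i-1)) ∪ (fv '' Set.Icc 1 (m-i-1)))) ∧
  (∀ j j', 1 ≤ j → j ≤ m-i → 1 ≤ j' → j' ≤ m-i →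
      betaD N m k (fv j) (ev j') = (if j + j' = m - i + 1 then (-1:ℂ)^(j-1) else 0) ∧
      betaD N m k (ev j) (ev j') = 0 ∧ betaD N m k (fv j) (fv j') = 0) ∧
  (∀ j j', 1 ≤ j → j ≤ m-i-1 → 1 ≤ j' → j' ≤ m-i-1 →
      betaC N m k (fv j) (ev j') = (if j + j' = m - i then (-1:ℂ)^(j-1) else 0) ∧
      betaC N m k (ev j') (fv j) = -(if j + j' = m - i then (-1:ℂ)^(j-1) else 0) ∧
      betaC N m k (ev j) (ev j') = 0 ∧ betaC N m k (fv j) (fv j') = 0) ∧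
  (∀ j j', 1 ≤ j → j ≤ m-i → 1 ≤ j' → j' ≤ m-i →
      (inner ℂ (ev j) (ev j') : ℂ) = (if j = j' then 1 else 0) ∧
      (inner ℂ (fv j) (fv j') : ℂ) = (if j = j' then 1 else 0) ∧
      (inner ℂ (ev j) (fv j') : ℂ) = 0) ∧
  (∀ j, 1 ≤ j → j ≤ m-i → ev j ∈ Fiᗮ ∧ fv j ∈ Fiᗮ) ∧
  (∀ j, 2 ≤ j → j ≤ m-i → Cmap N (ev j) = Cmap N (zMap N (ev j)) ∧
      Cmap N (fv j) = Cmap N (zMap N (fv j)))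

/-! Every point of `S_a ∩ S_b` satisfies `x_j = ±x_i` along each edge of the circle diagram,
with a sign that depends only on the edge; hence all points of the intersection carry the same
sign pattern as a fixed point `x₀`. On a component containing a ray these relations propagate
the fixed value at the ray, so `x = x₀` there; on a closed component `x` is determined by its
value at one vertex, and that value can be chosen freely on `S²`. -/

section SameSign

variable {α : Type*} [InvolutiveNeg α]

def SameSign (u v u' v' : α) : Prop :=
  (v = u ∧ v' = u') ∨ (v = -u ∧ v' = -u')

lemma SameSign.refl (u u' : α) : SameSign u u u' u' := Or.inl ⟨rfl, rfl⟩

lemma SameSign.symm {u v u' v' : α} (h : SameSign u v u' v') : SameSign v u v' u' := by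
  rcases h with ⟨rfl, rfl⟩ | ⟨rfl, rfl⟩
  · exact .refl _ _
  · exact Or.inr ⟨(neg_neg u).symm, (neg_neg u').symm⟩

lemma SameSign.trans {u v w u' v' w' : α} (h₁ : SameSign u v u' v') (h₂ : SameSign v w v' w') :
    SameSign u w u' w' := by
  rcases h₁ with ⟨rfl, rfl⟩ | ⟨rfl, rfl⟩ <;> rcases h₂ with ⟨rfl, rfl⟩ | ⟨rfl, rfl⟩ <;>
    simp [SameSign]

lemma SameSign.eq_or_eq_neg {u v u' v' : α} (h : SameSign u v u' v') : v' = u' ∨ v' = -u' :=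
  h.imp And.right And.right

lemma SameSign.eq_of_eq {u v u' v' : α} (h : SameSign u v u' v') (hu : u = u') : v = v' := by
  rcases h with ⟨rfl, rfl⟩ | ⟨rfl, rfl⟩ <;> rw [hu]

lemma SameSign.eq_ite [DecidableEq α] {u v u' v' : α} (hu' : u' ≠ -u') (h : SameSign u v u' v') :
    v = if v' = u' then u else -u := by
  rcases h with ⟨rfl, rfl⟩ | ⟨rfl, rfl⟩
  · rw [if_pos rfl]
  · rw [if_neg fun h => hu' h.symm]

lemma sameSign_ite [DecidableEq α] {u v w : α} (hu : u ≠ -u) (hv : v = u ∨ v = -u)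
    (hw : w = u ∨ w = -u) (y : α) :
    SameSign (if v = u then y else -y) (if w = u then y else -y) v w := by
  have hne : -u ≠ u := fun h => hu h.symm
  rcases hv with rfl | rfl <;> rcases hw with rfl | rfl <;> simp [SameSign, hne]

end SameSign

lemma CupDiagram.exists_fin_of_mem_cups {m : ℕ} (a : CupDiagram m) {v w : ℕ}
    (h : (v, w) ∈ a.cups) : ∃ i j : Fin m, v = i.1 + 1 ∧ w = j.1 + 1 := by
  obtain ⟨h₁, h₂, h₃⟩ : 1 ≤ v ∧ v < w ∧ w ≤ m := a.cups_valid _ h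
  exact ⟨⟨v - 1, by omega⟩, ⟨w - 1, by omega⟩, by simp only; omega, by simp only; omega⟩

lemma CupDiagram.HasRay.exists_fin {m : ℕ} {a : CupDiagram m} {w : ℕ} (h : a.HasRay w) :
    ∃ j : Fin m, w = j.1 + 1 :=
  ⟨⟨w - 1, by have := h.1; have := h.2.1; omega⟩, (Nat.sub_add_cancel h.1).symm⟩

section CircleDiagram

variable {m : ℕ} {a b : CupDiagram m}

lemma EdgeRel.symm {v w : ℕ} (h : EdgeRel m a b v w) : EdgeRel m a b w v := by
  unfold EdgeRel at *
  tauto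

lemma Reach.symm {v w : ℕ} (h : Reach m a b v w) : Reach m a b w v := by
  induction h with
  | refl => exact .refl
  | tail _ hedge ih => exact ih.head hedge.symm

lemma EdgeRel.exists_fin {v w : ℕ} (h : EdgeRel m a b v w) :
    ∃ i j : Fin m, v = i.1 + 1 ∧ w = j.1 + 1 := by
  rcases h with h | h | h | h
  · exact a.exists_fin_of_mem_cups h
  · obtain ⟨i, j, hi, hj⟩ := a.exists_fin_of_mem_cups h
    exact ⟨j, i, hj, hi⟩
  · exact b.exists_fin_of_mem_cups h
  · obtain ⟨i, j, hi, hj⟩ := b.exists_fin_of_mem_cups h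
    exact ⟨j, i, hj, hi⟩

end CircleDiagram

section Sa

variable {m : ℕ} {a : CupDiagram m} {x x₀ : Fin m → Sph}

lemma Sph.ne_neg (u : Sph) : u ≠ -u := ne_neg_of_mem_unit_sphere ℝ u

lemma Sph.coe_eq_neg_coe_iff {u v : Sph} : (u : E3) = -(v : E3) ↔ u = -v := by
  rw [← coe_neg_sphere, Subtype.coe_inj]

lemma sameSign_of_mem_cups (hx : x ∈ Sa m a) (hx₀ : x₀ ∈ Sa m a) {i j : Fin m}
    (h : (i.1 + 1, j.1 + 1) ∈ a.cups) : SameSign (x i) (x j) (x₀ i) (x₀ j) := by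
  by_cases hd : (i.1 + 1, j.1 + 1) ∈ a.dottedCups
  · exact Or.inl ⟨Subtype.ext ((hx.1 i j h).2 hd).symm, Subtype.ext ((hx₀.1 i j h).2 hd).symm⟩
  · refine Or.inr ⟨?_, ?_⟩
    · rw [Sph.coe_eq_neg_coe_iff.mp ((hx.1 i j h).1 hd), neg_neg]
    · rw [Sph.coe_eq_neg_coe_iff.mp ((hx₀.1 i j h).1 hd), neg_neg]

lemma eq_of_hasRay (hx : x ∈ Sa m a) (hx₀ : x₀ ∈ Sa m a) {j : Fin m}
    (h : a.HasRay (j.1 + 1)) : x j = x₀ j := by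
  have hxj := hx.2 j h
  have hx₀j := hx₀.2 j h
  apply Subtype.ext
  by_cases hd : j.1 + 1 ∈ a.dottedRays
  · rw [hxj.1 hd, hx₀j.1 hd]
  by_cases hr : ∃ r, a.HasRay r ∧ j.1 + 1 < r
  · rw [(hxj.2 hd).2 hr, (hx₀j.2 hd).2 hr]
  · push Not at hr
    rw [(hxj.2 hd).1 hr, (hx₀j.2 hd).1 hr]

lemma mem_Sa_of_sameSign (hx₀ : x₀ ∈ Sa m a)
    (hcup : ∀ i j : Fin m, (i.1 + 1, j.1 + 1) ∈ a.cups → SameSign (x i) (x j) (x₀ i) (x₀ j))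
    (hray : ∀ i : Fin m, a.HasRay (i.1 + 1) → x i = x₀ i) : x ∈ Sa m a := by
  refine ⟨fun i j h => ⟨fun hd => ?_, fun hd => ?_⟩, fun i h => hray i h ▸ hx₀.2 i h⟩
  · have h₀ := Sph.coe_eq_neg_coe_iff.mp ((hx₀.1 i j h).1 hd)
    rcases hcup i j h with ⟨-, h'⟩ | ⟨hxj, -⟩
    · rw [h'] at h₀
      exact absurd h₀ (Sph.ne_neg _)
    · rw [hxj, coe_neg_sphere, neg_neg]
  · have h₀ := Subtype.ext ((hx₀.1 i j h).2 hd)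
    rcases hcup i j h with ⟨hxj, -⟩ | ⟨-, h'⟩
    · rw [hxj]
    · exact absurd (h₀.trans h') (Sph.ne_neg _)

end Sa

section Intersection

variable {m : ℕ} {a b : CupDiagram m} {x x₀ : Fin m → Sph}

lemma sameSign_of_edgeRel (hx : x ∈ Sa m a ∩ Sa m b) (hx₀ : x₀ ∈ Sa m a ∩ Sa m b)
    {i j : Fin m} (h : EdgeRel m a b (i.1 + 1) (j.1 + 1)) :
    SameSign (x i) (x j) (x₀ i) (x₀ j) := by
  rcases h with h | h | h | h
  · exact sameSign_of_mem_cups hx.1 hx₀.1 h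
  · exact (sameSign_of_mem_cups hx.1 hx₀.1 h).symm
  · exact sameSign_of_mem_cups hx.2 hx₀.2 h
  · exact (sameSign_of_mem_cups hx.2 hx₀.2 h).symm

lemma sameSign_of_reach (hx : x ∈ Sa m a ∩ Sa m b) (hx₀ : x₀ ∈ Sa m a ∩ Sa m b)
    {i j : Fin m} (h : Reach m a b (i.1 + 1) (j.1 + 1)) :
    SameSign (x i) (x j) (x₀ i) (x₀ j) := by
  generalize hw : j.1 + 1 = w at h
  induction h generalizing j with
  | refl =>
    obtain rfl : j = i := Fin.ext (by omega)
    exact .refl _ _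
  | tail _ hedge ih =>
    obtain ⟨l, j', rfl, rfl⟩ := hedge.exists_fin
    obtain rfl : j = j' := Fin.ext (by omega)
    exact (ih rfl).trans (sameSign_of_edgeRel hx hx₀ hedge)

lemma eq_of_reach_hasRay (hx : x ∈ Sa m a ∩ Sa m b) (hx₀ : x₀ ∈ Sa m a ∩ Sa m b)
    {i : Fin m} {w : ℕ} (h : Reach m a b (i.1 + 1) w) (hw : a.HasRay w ∨ b.HasRay w) :
    x i = x₀ i := by
  obtain ⟨j, rfl⟩ := hw.elim CupDiagram.HasRay.exists_fin CupDiagram.HasRay.exists_fin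
  refine (sameSign_of_reach hx hx₀ h).symm.eq_of_eq ?_
  exact hw.elim (eq_of_hasRay hx.1 hx₀.1) (eq_of_hasRay hx.2 hx₀.2)

end Intersection

section ClosedComponents

variable {m : ℕ} {a b : CupDiagram m}

def closedComps (m : ℕ) (a b : CupDiagram m) : Set (Set ℕ) :=
  {s | ∃ v, 1 ≤ v ∧ v ≤ m ∧ IsClosedCompAt m a b v ∧ s = {w | Reach m a b v w}}

lemma numClosed_eq_ncard : numClosed m a b = (closedComps m a b).ncard := rfl

lemma closedComps_finite : (closedComps m a b).Finite :=
  ((Set.finite_Icc 1 m).image fun v => {w | Reach m a b v w}).subset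
    fun _ ⟨v, hv₁, hv₂, _, hs⟩ => ⟨v, ⟨hv₁, hv₂⟩, hs.symm⟩

lemma comp_eq_of_mem_closedComps {s : Set ℕ} (hs : s ∈ closedComps m a b) {w : ℕ}
    (hw : w ∈ s) : {u | Reach m a b w u} = s := by
  obtain ⟨v, -, -, -, rfl⟩ := hs
  ext u
  exact ⟨fun hu => Relation.ReflTransGen.trans hw hu, fun hu => hw.symm.trans hu⟩

lemma not_hasRay_of_mem_closedComps {s : Set ℕ} (hs : s ∈ closedComps m a b) {w : ℕ}
    (hw : w ∈ s) : ¬(a.HasRay w ∨ b.HasRay w) := by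
  obtain ⟨v, -, -, hv, rfl⟩ := hs
  exact fun h => h.elim (hv w hw).1 (hv w hw).2

lemma exists_fin_mem_of_mem_closedComps {s : Set ℕ} (hs : s ∈ closedComps m a b) :
    ∃ i : Fin m, i.1 + 1 ∈ s := by
  obtain ⟨v, hv₁, hv₂, -, rfl⟩ := hs
  refine ⟨⟨v - 1, by omega⟩, ?_⟩
  show Reach m a b v (v - 1 + 1)
  rw [Nat.sub_add_cancel hv₁]
  exact .refl

lemma exists_reach_hasRay_of_not_mem_closedComps (i : Fin m)
    (h : {w | Reach m a b (i.1 + 1) w} ∉ closedComps m a b) :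
    ∃ w, Reach m a b (i.1 + 1) w ∧ (a.HasRay w ∨ b.HasRay w) := by
  by_contra! hray
  exact h ⟨i.1 + 1, by omega, i.2, hray, rfl⟩

noncomputable def closedCompRep (s : closedComps m a b) : Fin m :=
  (exists_fin_mem_of_mem_closedComps s.2).choose

lemma closedCompRep_mem (s : closedComps m a b) : (closedCompRep s).1 + 1 ∈ s.1 :=
  (exists_fin_mem_of_mem_closedComps s.2).choose_spec

end ClosedComponents

section Homeomorph

open scoped Classical

variable {m : ℕ} {a b : CupDiagram m} {x₀ : Fin m → Sph}

noncomputable def ofClosedComps (x₀ : Fin m → Sph) (y : closedComps m a b → Sph)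
    (i : Fin m) : Sph :=
  if h : {w | Reach m a b (i.1 + 1) w} ∈ closedComps m a b then
    if x₀ i = x₀ (closedCompRep ⟨_, h⟩) then y ⟨_, h⟩ else -y ⟨_, h⟩
  else x₀ i

lemma ofClosedComps_of_mem (y : closedComps m a b → Sph) (s : closedComps m a b) {i : Fin m}
    (hi : i.1 + 1 ∈ s.1) :
    ofClosedComps x₀ y i = if x₀ i = x₀ (closedCompRep s) then y s else -y s := by
  have hcomp := comp_eq_of_mem_closedComps s.2 hi
  have hmem : {w | Reach m a b (i.1 + 1) w} ∈ closedComps m a b := hcomp ▸ s.2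
  rw [ofClosedComps, dif_pos hmem, show (⟨_, hmem⟩ : closedComps m a b) = s from Subtype.ext hcomp]

lemma ofClosedComps_of_not_mem (y : closedComps m a b → Sph) {i : Fin m}
    (hi : {w | Reach m a b (i.1 + 1) w} ∉ closedComps m a b) : ofClosedComps x₀ y i = x₀ i :=
  dif_neg hi

lemma continuous_ofClosedComps : Continuous (ofClosedComps (a := a) (b := b) x₀) := by
  refine continuous_pi fun i => ?_
  unfold ofClosedComps
  split_ifs <;> fun_prop

variable (hx₀ : x₀ ∈ Sa m a ∩ Sa m b)
include hx₀

lemma sameSign_ofClosedComps (y : closedComps m a b → Sph) {i j : Fin m}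
    (h : EdgeRel m a b (i.1 + 1) (j.1 + 1)) :
    SameSign (ofClosedComps x₀ y i) (ofClosedComps x₀ y j) (x₀ i) (x₀ j) := by
  by_cases hi : {w | Reach m a b (i.1 + 1) w} ∈ closedComps m a b
  · set s : closedComps m a b := ⟨_, hi⟩
    have hj : j.1 + 1 ∈ s.1 := Relation.ReflTransGen.single h
    set r := closedCompRep s
    have hsign : ∀ l : Fin m, l.1 + 1 ∈ s.1 → x₀ l = x₀ r ∨ x₀ l = -x₀ r := fun l hl =>
      (sameSign_of_reach hx₀ hx₀ (hl.symm.trans (closedCompRep_mem s))).symm.eq_or_eq_neg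
    rw [ofClosedComps_of_mem y s Relation.ReflTransGen.refl, ofClosedComps_of_mem y s hj]
    exact sameSign_ite (Sph.ne_neg _) (hsign i Relation.ReflTransGen.refl) (hsign j hj) _
  · have hj : {w | Reach m a b (j.1 + 1) w} ∉ closedComps m a b := fun hj =>
      hi (comp_eq_of_mem_closedComps hj (Relation.ReflTransGen.single h.symm) ▸ hj)
    rw [ofClosedComps_of_not_mem y hi, ofClosedComps_of_not_mem y hj]
    exact sameSign_of_edgeRel hx₀ hx₀ h

lemma ofClosedComps_mem (y : closedComps m a b → Sph) :
    ofClosedComps x₀ y ∈ Sa m a ∩ Sa m b := by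
  have hray : ∀ i : Fin m, a.HasRay (i.1 + 1) ∨ b.HasRay (i.1 + 1) →
      ofClosedComps x₀ y i = x₀ i := fun i h =>
    ofClosedComps_of_not_mem y fun hs =>
      not_hasRay_of_mem_closedComps hs Relation.ReflTransGen.refl h
  exact ⟨mem_Sa_of_sameSign hx₀.1 (fun _ _ h => sameSign_ofClosedComps hx₀ y (.inl h))
      (fun i h => hray i (.inl h)),
    mem_Sa_of_sameSign hx₀.2 (fun _ _ h => sameSign_ofClosedComps hx₀ y (.inr (.inr (.inl h))))
      (fun i h => hray i (.inr h))⟩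

lemma ofClosedComps_restrict {x : Fin m → Sph} (hx : x ∈ Sa m a ∩ Sa m b) :
    ofClosedComps x₀ (fun s : closedComps m a b => x (closedCompRep s)) = x := by
  funext i
  by_cases hi : {w | Reach m a b (i.1 + 1) w} ∈ closedComps m a b
  · set s : closedComps m a b := ⟨_, hi⟩
    have hri : Reach m a b ((closedCompRep s).1 + 1) (i.1 + 1) :=
      (closedCompRep_mem s : Reach m a b _ _).symm
    rw [ofClosedComps_of_mem _ s Relation.ReflTransGen.refl]
    exact ((sameSign_of_reach hx hx₀ hri).eq_ite (Sph.ne_neg _)).symm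
  · obtain ⟨w, hw, hray⟩ := exists_reach_hasRay_of_not_mem_closedComps i hi
    rw [ofClosedComps_of_not_mem _ hi, eq_of_reach_hasRay hx hx₀ hw hray]

noncomputable def homeomorphClosedComps :
    ↥(Sa m a ∩ Sa m b) ≃ₜ (closedComps m a b → Sph) where
  toFun x s := x.1 (closedCompRep s)
  invFun y := ⟨ofClosedComps x₀ y, ofClosedComps_mem hx₀ y⟩
  left_inv x := Subtype.ext (ofClosedComps_restrict hx₀ x.2)
  right_inv y := funext fun s => by
    show ofClosedComps x₀ y (closedCompRep s) = y s
    rw [ofClosedComps_of_mem y s (closedCompRep_mem s), if_pos rfl]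
  continuous_toFun := continuous_pi fun _ => (continuous_apply _).comp continuous_subtype_val
  continuous_invFun := continuous_ofClosedComps.subtype_mk _

end Homeomorph

theorem statement6_general (m : ℕ) (a b : CupDiagram m) (hne : (Sa m a ∩ Sa m b).Nonempty) :
    Nonempty (↥(Sa m a ∩ Sa m b) ≃ₜ (Fin (numClosed m a b) → Sph)) := by
  obtain ⟨x₀, hx₀⟩ := hne
  have : Finite (closedComps m a b) := closedComps_finite.to_subtype
  exact ⟨(homeomorphClosedComps hx₀).trans (Homeomorph.piCongrLeft (Y := fun _ => Sph)
    (Finite.equivFinOfCardEq ((Nat.card_coe_set_eq _).trans numClosed_eq_ncard.symm)))⟩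

/-- If `S_a ∩ S_b ≠ ∅` then `S_a ∩ S_b` is homeomorphic to `(S²)^circ`,
where `circ` is the number of closed connected components of the circle diagram of `a`
and `b`. -/
theorem statement6 (m k : ℕ) (hm : 1 ≤ m) (hk1 : 1 ≤ k) (hk2 : k ≤ m) (hkadm : k = m ∨ Odd k)
    (a b : CupDiagram m) (ha : a.cups.card = k / 2) (hb : b.cups.card = k / 2)
    (hne : (Sa m a ∩ Sa m b).Nonempty) :
    Nonempty (↥(Sa m a ∩ Sa m b) ≃ₜ (Fin (numClosed m a b) → Sph)) :=
  statement6_general m a b hne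

end Spr
end
end

section
/- Let 1 ≤ k ≤ m with k = m or k odd. If a ∈ B^{n-k,k}_even (a has an even total number of dots) and b ∈ B^{n-k,k}_odd (b has an odd total number of dots), then S_a ∩ S_b = ∅. Consequently the topological Springer fiber S^{n-k,k}_D is the disjoint union of S^{n-k,k}_{D,even} = ⋃_{a ∈ B^{n-k,k}_even} S_a and S^{n-k,k}_{D,odd} = ⋃_{a ∈ B^{n-k,k}_odd} S_a. -/
noncomputable section
namespace Spr

/-! For `v ≠ 0` exactly one of `v`, `-v` has a negative first nonzero coordinate, so for
`x ∈ S_a` the number of lexicographically negative `x_i` is, mod 2, the number of undotted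
cups (one per undotted cup, zero or two per dotted cup) plus one if the rightmost ray is
undotted (it sits at `-p`, all other rays at `p` or `q`). Since only the rightmost ray can be
dotted, this parity is `#cups + #dots + [a has a ray]`, and both `#cups` and the existence of a
ray are the same for all diagrams with `⌊k/2⌋` cups; so `x` determines the parity of the dots. -/

section NegParity

variable {G : Type*} [AddCommGroup G] [LinearOrder G]

def negParity (v : G) : ZMod 2 := if v < 0 then 1 else 0

lemma negParity_of_pos {v : G} (hv : 0 < v) : negParity v = 0 :=
  if_neg hv.asymm

lemma negParity_neg [IsOrderedAddMonoid G] {v : G} (hv : v ≠ 0) :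
    negParity (-v) = negParity v + 1 := by
  rcases hv.lt_or_gt with hv | hv
  · rw [negParity_of_pos (neg_pos.2 hv), negParity, if_pos hv]
    decide
  · rw [negParity_of_pos hv, negParity, if_pos (neg_neg_iff_pos.2 hv), zero_add]

end NegParity

section LexParity

variable {n : ℕ}

def lexParity (v : EuclideanSpace ℝ (Fin n)) : ZMod 2 := negParity (toLex (WithLp.ofLp v))

lemma lexParity_neg {v : EuclideanSpace ℝ (Fin n)} (hv : v ≠ 0) :
    lexParity (-v) = lexParity v + 1 := by
  rw [lexParity, WithLp.ofLp_neg, toLex_neg]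
  exact negParity_neg (by simpa using hv)

lemma lexParity_single_one (i : Fin n) : lexParity (EuclideanSpace.single i (1 : ℝ)) = 0 := by
  refine negParity_of_pos ?_
  rw [PiLp.ofLp_single]
  exact Pi.lt_toLex_update_self_iff.2 one_pos

end LexParity

lemma lexParity_pPt : lexParity pPt = 0 := lexParity_single_one 2

lemma lexParity_qPt : lexParity qPt = 0 := lexParity_single_one 0

lemma lexParity_neg_pPt : lexParity (-pPt) = 1 := by
  rw [lexParity_neg, lexParity_pPt, zero_add]
  simp [pPt]

namespace CupDiagram

open Finset

variable {m : ℕ} (a : CupDiagram m)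

def cupEnds : Finset ℕ := a.cups.biUnion fun p => {p.1, p.2}

open scoped Classical in
def rays : Finset ℕ := (Icc 1 m).filter a.HasRay

variable {a}

lemma mem_cupEnds {v : ℕ} : v ∈ a.cupEnds ↔ ∃ p ∈ a.cups, v = p.1 ∨ v = p.2 := by
  simp [cupEnds]

lemma mem_rays {v : ℕ} : v ∈ a.rays ↔ a.HasRay v := by
  simp only [rays, mem_filter, mem_Icc, and_iff_right_iff_imp]
  exact fun h => ⟨h.1, h.2.1⟩

variable (a)

lemma pairwiseDisjoint_cups :
    (a.cups : Set (ℕ × ℕ)).PairwiseDisjoint fun p => ({p.1, p.2} : Finset ℕ) := by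
  intro p hp q hq hpq
  have := a.cups_disjoint p hp q hq hpq
  simp only [Function.onFun, disjoint_insert_left, disjoint_singleton_left, mem_insert,
    mem_singleton]
  tauto

lemma card_cupEnds : #a.cupEnds = 2 * #a.cups := by
  rw [cupEnds, card_biUnion a.pairwiseDisjoint_cups,
    sum_congr rfl fun p hp => card_pair (a.cups_valid p hp).2.1.ne, sum_const, smul_eq_mul,
    mul_comm]

lemma disjoint_cupEnds_rays : Disjoint a.cupEnds a.rays := by
  refine disjoint_left.2 fun v hv hray => ?_
  obtain ⟨p, hp, rfl | rfl⟩ := mem_cupEnds.1 hv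
  · exact ((mem_rays.1 hray).2.2 p hp).1 rfl
  · exact ((mem_rays.1 hray).2.2 p hp).2 rfl

lemma cupEnds_union_rays : a.cupEnds ∪ a.rays = Icc 1 m := by
  ext v
  simp only [mem_union, mem_Icc, mem_cupEnds, mem_rays]
  constructor
  · rintro (⟨p, hp, rfl | rfl⟩ | ⟨h1, h2, -⟩)
    · have := a.cups_valid p hp; omega
    · have := a.cups_valid p hp; omega
    · omega
  · intro hv
    by_cases hcup : ∃ p ∈ a.cups, v = p.1 ∨ v = p.2
    · exact Or.inl hcup
    · push Not at hcup
      exact Or.inr ⟨hv.1, hv.2, hcup⟩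

lemma rays_nonempty_iff : a.rays.Nonempty ↔ 2 * #a.cups < m := by
  have := card_union_of_disjoint a.disjoint_cupEnds_rays
  rw [cupEnds_union_rays, Nat.card_Icc, card_cupEnds] at this
  rw [← card_pos]
  omega

lemma le_of_mem_dottedRays {r v : ℕ} (hr : r ∈ a.dottedRays) (hv : a.HasRay v) : v ≤ r := by
  by_contra! hrv
  obtain ⟨p, hp, h | h⟩ := a.dottedRays_cond r hr v hrv hv.2.1
  · exact (hv.2.2 p hp).1 h
  · exact (hv.2.2 p hp).2 h

lemma dottedRays_subset_rays : a.dottedRays ⊆ a.rays :=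
  fun r hr => mem_rays.2 (a.dottedRays_valid r hr)

lemma dottedRays_subset_max' (h : a.rays.Nonempty) : a.dottedRays ⊆ {a.rays.max' h} := by
  intro r hr
  exact mem_singleton.2 <| le_antisymm (le_max' _ _ (a.dottedRays_subset_rays hr))
    (a.le_of_mem_dottedRays hr (mem_rays.1 (max'_mem _ h)))

end CupDiagram

section VertexPoint

open Finset

variable {m : ℕ}

/-- Vertex `v` of a diagram is coordinate `v - 1` of the tuple `x`; outside `[1, m]` the value
is a junk `0`. -/
def vertexPoint (x : Fin m → Sph) (v : ℕ) : E3 :=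
  if h : 1 ≤ v ∧ v ≤ m then x ⟨v - 1, by omega⟩ else 0

lemma vertexPoint_succ (x : Fin m → Sph) (i : Fin m) : vertexPoint x (i.val + 1) = x i := by
  simp [vertexPoint]

lemma exists_fin_val_succ_eq {v : ℕ} (h1 : 1 ≤ v) (h2 : v ≤ m) : ∃ i : Fin m, i.val + 1 = v :=
  ⟨⟨v - 1, by omega⟩, by simp only; omega⟩

variable {a : CupDiagram m} {x : Fin m → Sph}

lemma lexParity_cup (hx : x ∈ Sa m a) {p : ℕ × ℕ} (hp : p ∈ a.cups) :
    lexParity (vertexPoint x p.1) + lexParity (vertexPoint x p.2)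
      = if p ∈ a.dottedCups then 0 else 1 := by
  obtain ⟨u, w⟩ := p
  obtain ⟨hu, huw, hw⟩ := a.cups_valid _ hp
  obtain ⟨i, rfl⟩ := exists_fin_val_succ_eq (m := m) hu (by omega)
  obtain ⟨j, rfl⟩ := exists_fin_val_succ_eq (m := m) (by omega) hw
  simp only [vertexPoint_succ]
  obtain ⟨hundotted, hdotted⟩ := hx.1 i j hp
  split_ifs with hd
  · rw [hdotted hd, CharTwo.add_self_eq_zero]
  · rw [hundotted hd, lexParity_neg (ne_zero_of_mem_unit_sphere _), add_comm, ← add_assoc,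
      CharTwo.add_self_eq_zero, zero_add]

open scoped Classical in
lemma lexParity_ray (hx : x ∈ Sa m a) {v : ℕ} (hv : a.HasRay v) :
    lexParity (vertexPoint x v)
      = if v ∉ a.dottedRays ∧ ∀ r, a.HasRay r → r ≤ v then 1 else 0 := by
  obtain ⟨i, rfl⟩ := exists_fin_val_succ_eq (m := m) hv.1 hv.2.1
  rw [vertexPoint_succ]
  obtain ⟨hdotted, hundotted⟩ := hx.2 i hv
  by_cases hd : i.val + 1 ∈ a.dottedRays
  · rw [hdotted hd, lexParity_pPt, if_neg (fun h => h.1 hd)]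
  by_cases hmax : ∀ r, a.HasRay r → r ≤ i.val + 1
  · rw [(hundotted hd).1 hmax, lexParity_neg_pPt, if_pos ⟨hd, hmax⟩]
  · push Not at hmax
    obtain ⟨r, hr, hlt⟩ := hmax
    rw [(hundotted hd).2 ⟨r, hr, hlt⟩, lexParity_qPt, if_neg fun h => (h.2 r hr).not_gt hlt]

lemma sum_lexParity_cupEnds (hx : x ∈ Sa m a) :
    ∑ v ∈ a.cupEnds, lexParity (vertexPoint x v) = #a.cups + #a.dottedCups := by
  have hflip : ∀ p, (if p ∈ a.dottedCups then (0 : ZMod 2) else 1)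
      = 1 + if p ∈ a.dottedCups then 1 else 0 := by
    intro p; split_ifs <;> decide
  rw [CupDiagram.cupEnds, sum_biUnion a.pairwiseDisjoint_cups, sum_congr rfl fun p hp => by
    rw [sum_pair (a.cups_valid p hp).2.1.ne, lexParity_cup hx hp, hflip], sum_add_distrib,
    sum_const, nsmul_one, sum_boole, filter_mem_eq_inter, inter_eq_right.2 a.dottedCups_sub]

lemma sum_lexParity_rays (hx : x ∈ Sa m a) :
    ∑ v ∈ a.rays, lexParity (vertexPoint x v)
      = #a.dottedRays + if 2 * #a.cups < m then 1 else 0 := by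
  by_cases h : a.rays.Nonempty
  · set M := a.rays.max' h
    have hM : M ∈ a.rays := max'_mem _ h
    have hmax : ∀ r, a.HasRay r → r ≤ M := fun r hr => le_max' _ _ (CupDiagram.mem_rays.2 hr)
    rw [if_pos (a.rays_nonempty_iff.1 h), sum_eq_single_of_mem M hM fun v hv hvM => ?_]
    · rw [lexParity_ray hx (CupDiagram.mem_rays.1 hM)]
      rcases subset_singleton_iff.1 (a.dottedRays_subset_max' h) with hD | hD <;> rw [hD]
      · rw [if_pos ⟨notMem_empty M, hmax⟩, card_empty, Nat.cast_zero, zero_add]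
      · rw [if_neg fun hM => hM.1 (mem_singleton_self M), card_singleton]
        decide
    · rw [lexParity_ray hx (CupDiagram.mem_rays.1 hv), if_neg]
      exact fun hvmax => hvM <| le_antisymm (le_max' _ _ hv) (hvmax.2 M (CupDiagram.mem_rays.1 hM))
  · rw [not_nonempty_iff_eq_empty] at h
    have hD : a.dottedRays = ∅ := subset_empty.1 (h ▸ a.dottedRays_subset_rays)
    rw [h, hD, if_neg (mt a.rays_nonempty_iff.2 (by simp [h]))]
    simp

lemma sum_lexParity_vertexPoint (hx : x ∈ Sa m a) :
    ∑ v ∈ Icc 1 m, lexParity (vertexPoint x v)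
      = #a.cups + a.dots + if 2 * #a.cups < m then 1 else 0 := by
  rw [← a.cupEnds_union_rays, sum_union a.disjoint_cupEnds_rays, sum_lexParity_cupEnds hx,
    sum_lexParity_rays hx, CupDiagram.dots]
  push_cast
  ring

end VertexPoint

lemma natCast_dots_eq_of_mem_Sa {m : ℕ} {a b : CupDiagram m} {x : Fin m → Sph}
    (hxa : x ∈ Sa m a) (hxb : x ∈ Sa m b) (hcups : a.cups.card = b.cups.card) :
    (a.dots : ZMod 2) = b.dots := by
  have h := (sum_lexParity_vertexPoint hxa).symm.trans (sum_lexParity_vertexPoint hxb)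
  rw [hcups] at h
  exact add_left_cancel (add_right_cancel h)

lemma Sa_inter_Sa_eq_empty {m : ℕ} {a b : CupDiagram m} (hcups : a.cups.card = b.cups.card)
    (ha : Even a.dots) (hb : Odd b.dots) : Sa m a ∩ Sa m b = ∅ := by
  refine Set.eq_empty_iff_forall_notMem.2 fun x ⟨hxa, hxb⟩ => zero_ne_one (α := ZMod 2) ?_
  rw [← ZMod.natCast_eq_zero_iff_even.2 ha, ← ZMod.natCast_eq_one_iff_odd.2 hb]
  exact natCast_dots_eq_of_mem_Sa hxa hxb hcups

theorem statement7_general (m k : ℕ) :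
    (∀ a b : CupDiagram m, a.cups.card = k / 2 → b.cups.card = k / 2 →
      Even a.dots → Odd b.dots → Sa m a ∩ Sa m b = ∅) ∧
    (⋃ a ∈ {a : CupDiagram m | a.cups.card = k / 2}, Sa m a)
      = (⋃ a ∈ {a : CupDiagram m | a.cups.card = k / 2 ∧ Even a.dots}, Sa m a)
        ∪ (⋃ a ∈ {a : CupDiagram m | a.cups.card = k / 2 ∧ Odd a.dots}, Sa m a) ∧
    Disjoint (⋃ a ∈ {a : CupDiagram m | a.cups.card = k / 2 ∧ Even a.dots}, Sa m a)
      (⋃ a ∈ {a : CupDiagram m | a.cups.card = k / 2 ∧ Odd a.dots}, Sa m a) := by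
  refine ⟨fun a b ha hb => Sa_inter_Sa_eq_empty (ha.trans hb.symm), ?_, ?_⟩
  · ext x
    simp only [Set.mem_iUnion, Set.mem_union, Set.mem_ofPred_eq, exists_prop]
    constructor
    · rintro ⟨a, ha, hx⟩
      exact (Nat.even_or_odd a.dots).imp (fun h => ⟨a, ⟨ha, h⟩, hx⟩) fun h => ⟨a, ⟨ha, h⟩, hx⟩
    · rintro (⟨a, ⟨ha, -⟩, hx⟩ | ⟨a, ⟨ha, -⟩, hx⟩) <;> exact ⟨a, ha, hx⟩
  · refine Set.disjoint_iUnion₂_left.2 fun a ha => Set.disjoint_iUnion₂_right.2 fun b hb => ?_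
    exact Set.disjoint_iff_inter_eq_empty.2 (Sa_inter_Sa_eq_empty (ha.1.trans hb.1.symm) ha.2 hb.2)

/-- If `a ∈ B^{n-k,k}_even` and `b ∈ B^{n-k,k}_odd` then `S_a ∩ S_b = ∅`;
consequently the topological Springer fiber is the disjoint union of its even and odd
parts. -/
theorem statement7 (m k : ℕ) (hm : 1 ≤ m) (hk1 : 1 ≤ k) (hk2 : k ≤ m) (hkadm : k = m ∨ Odd k) :
    (∀ a b : CupDiagram m, a.cups.card = k / 2 → b.cups.card = k / 2 →
      Even a.dots → Odd b.dots → Sa m a ∩ Sa m b = ∅) ∧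
    (⋃ a ∈ {a : CupDiagram m | a.cups.card = k / 2}, Sa m a)
      = (⋃ a ∈ {a : CupDiagram m | a.cups.card = k / 2 ∧ Even a.dots}, Sa m a)
        ∪ (⋃ a ∈ {a : CupDiagram m | a.cups.card = k / 2 ∧ Odd a.dots}, Sa m a) ∧
    Disjoint (⋃ a ∈ {a : CupDiagram m | a.cups.card = k / 2 ∧ Even a.dots}, Sa m a)
      (⋃ a ∈ {a : CupDiagram m | a.cups.card = k / 2 ∧ Odd a.dots}, Sa m a) :=
  statement7_general m k

end Spr
end
end

section
/- Let 3 ≤ k ≤ m with k = m or k odd, and let U ⊆ V be a complex subspace. If z(U) is contained in E_{n-k-2,k-2} and z(U) is isotropic with respect to β_D^{n-k-2,k-2}, then U is contained in E_{n-k,k} and U is isotropic with respect to β_D^{n-k,k}. -/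
noncomputable section
namespace Spr

/-! In coordinates, `z` is the cyclic shift `ρ` of indices (`(z v)_a = v_{ρ a}`), except that it
kills the coordinates at `ρ a ∈ {e_1, f_1}`. Hence `zU ⊆ E_{n-k-2,k-2}` forces `U ⊆ E_{n-k-1,k-1}`.
Reindexed by `ρ`, the Gram matrix of `β_D^{n-k,k}` is minus that of `β_D^{n-k-2,k-2}`, apart from
the rows and columns of `e_1, f_1`, which only pair with coordinates vanishing on `E_{n-k-1,k-1}`.
So `β_D^{n-k,k}(v, w) = -β_D^{n-k-2,k-2}(z v, z w) = 0` for `v, w ∈ U`. -/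

lemma mem_Esub_iff {N a b : ℕ} {v : Vsp N} :
    v ∈ Esub N a b ↔ ∀ q : Fin (2*N), (q.val < N ∧ a ≤ q.val) ∨ N + b ≤ q.val → v q = 0 := by
  constructor
  · intro hv
    induction hv using Submodule.span_induction with
    | mem x hx =>
      intro q hq
      rcases hx with ⟨i, hi, rfl⟩ | ⟨i, hi, rfl⟩ <;> rw [Set.mem_Icc] at hi
      · simp only [eVec]
        split_ifs
        · rw [PiLp.single_apply, if_neg (by rintro rfl; simp only at hq; omega)]
        · rfl
      · simp only [fVec]
        split_ifs
        · rw [PiLp.single_apply, if_neg (by rintro rfl; simp only at hq; omega)]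
        · rfl
    | zero => intro q _; rfl
    | add x y _ _ hx hy => intro q hq; simp [hx q hq, hy q hq]
    | smul c x _ hx => intro q hq; simp [hx q hq]
  · intro hv
    rw [← (EuclideanSpace.basisFun (Fin (2*N)) ℂ).sum_repr v]
    refine Submodule.sum_mem _ fun q _ => ?_
    by_cases hq : (q.val < N ∧ a ≤ q.val) ∨ N + b ≤ q.val
    · simp [hv q hq]
    refine Submodule.smul_mem _ _ (Submodule.subset_span ?_)
    rw [EuclideanSpace.basisFun_apply]
    by_cases hqN : q.val < N
    · refine Or.inl ⟨q.val + 1, Set.mem_Icc.2 ⟨by omega, by omega⟩, ?_⟩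
      rw [eVec, dif_pos ⟨by omega, by omega⟩]
      rfl
    · refine Or.inr ⟨q.val - N + 1, Set.mem_Icc.2 ⟨by omega, by omega⟩, ?_⟩
      rw [fVec, dif_pos ⟨by omega, by omega⟩]
      congr
      omega

lemma Esub_mono {N a b a' b' : ℕ} (ha : a ≤ a') (hb : b ≤ b') : Esub N a b ≤ Esub N a' b' :=
  Submodule.span_mono <| Set.union_subset_union
    (Set.image_mono (Set.Icc_subset_Icc_right ha)) (Set.image_mono (Set.Icc_subset_Icc_right hb))

lemma finRotate_val {n : ℕ} (a : Fin n) :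
    (finRotate n a).val = if a.val + 1 = n then 0 else a.val + 1 := by
  have := a.neZero
  rw [finRotate_apply, Fin.val_add, Fin.val_one', Nat.add_mod_mod]
  split_ifs with h
  · rw [h, Nat.mod_self]
  · exact Nat.mod_eq_of_lt (by omega)

lemma zMap_apply_eq_ite {N : ℕ} (v : Vsp N) (a : Fin (2*N)) :
    zMap N v a =
      if (finRotate _ a).val = 0 ∨ (finRotate _ a).val = N then 0 else v (finRotate _ a) := by
  have hrot := finRotate_val a
  change (if h : a.val + 1 < 2*N ∧ a.val + 1 ≠ N then v ⟨a.val+1, h.1⟩ else 0) = _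
  split_ifs at hrot <;> split_ifs
  all_goals first | omega | rfl | exact congrArg v (Fin.ext hrot.symm)

lemma mem_Esub_of_zMap_mem {N a b : ℕ} {v : Vsp N} (hv : zMap N v ∈ Esub N a b) :
    v ∈ Esub N (a+1) (b+1) := by
  rw [mem_Esub_iff] at hv ⊢
  intro q hq
  set p := (finRotate (2*N)).symm q
  have hpq : finRotate (2*N) p = q := Equiv.apply_symm_apply _ q
  have hp := finRotate_val p
  rw [hpq] at hp
  have hzv := zMap_apply_eq_ite v p
  rw [hpq, if_neg (by omega)] at hzv
  rw [← hzv]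
  exact hv p (by split_ifs at hp <;> omega)

section ShiftIdentity

variable {N m k : ℕ}

lemma cD_eq_neg_cD_of_val_eq_succ (hk : 2 ≤ k) (hkm : k ≤ m) {a b p q : Fin (2*N)}
    (hp : p.val = a.val + 1) (hq : q.val = b.val + 1) (hpN : p.val ≠ N) (hqN : q.val ≠ N) :
    cD N m k p q = -cD N (m-2) (k-2) a b := by
  have hpow : ∀ s t : ℕ, s = t + 1 → (-1 : ℂ) ^ s = -(-1) ^ t := by
    rintro s t rfl
    ring
  by_cases hkm' : k = m
  · simp only [cD, if_pos hkm', if_pos (show k - 2 = m - 2 by omega)]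
    split_ifs <;> first | ring1 | exact hpow _ _ (by omega) | omega
  · simp only [cD, if_neg hkm', if_neg (show ¬k - 2 = m - 2 by omega)]
    split_ifs <;> first | ring1 | exact hpow _ _ (by omega) | omega

lemma cD_mul_eq_zero_of_boundary_left {p q : Fin (2*N)} {w : Vsp N}
    (hp : p.val = 0 ∨ p.val = N) (hw : w ∈ Esub N (2*m-k-1) (k-1)) :
    cD N m k p q * w q = 0 := by
  by_cases hq : (q.val < N ∧ 2*m-k-1 ≤ q.val) ∨ N + (k-1) ≤ q.val
  · rw [mem_Esub_iff.1 hw q hq, mul_zero]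
  · simp only [cD]
    split_ifs <;> first | rw [zero_mul] | omega

lemma mul_cD_eq_zero_of_boundary_right {p q : Fin (2*N)} {v : Vsp N}
    (hq : q.val = 0 ∨ q.val = N) (hv : v ∈ Esub N (2*m-k-1) (k-1)) :
    v p * cD N m k p q = 0 := by
  by_cases hp : (p.val < N ∧ 2*m-k-1 ≤ p.val) ∨ N + (k-1) ≤ p.val
  · rw [mem_Esub_iff.1 hv p hp, zero_mul]
  · simp only [cD]
    split_ifs <;> first | rw [mul_zero] | omega

lemma zMap_mul_cD_mul_zMap (hk : 2 ≤ k) (hkm : k ≤ m) {v w : Vsp N}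
    (hv : v ∈ Esub N (2*m-k-1) (k-1)) (hw : w ∈ Esub N (2*m-k-1) (k-1)) (a b : Fin (2*N)) :
    zMap N v a * (cD N (m-2) (k-2) a b * zMap N w b) =
      -(v (finRotate _ a) * (cD N m k (finRotate _ a) (finRotate _ b) * w (finRotate _ b))) := by
  rw [zMap_apply_eq_ite v a, zMap_apply_eq_ite w b]
  by_cases ha : (finRotate _ a).val = 0 ∨ (finRotate _ a).val = N
  · rw [if_pos ha, cD_mul_eq_zero_of_boundary_left ha hw]
    ring
  by_cases hb : (finRotate _ b).val = 0 ∨ (finRotate _ b).val = N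
  · rw [if_pos hb, ← mul_assoc _ (cD N m k _ _), mul_cD_eq_zero_of_boundary_right hb hv]
    ring
  have ha' := finRotate_val a
  have hb' := finRotate_val b
  split_ifs at ha' hb' <;> try omega
  rw [if_neg ha, if_neg hb, cD_eq_neg_cD_of_val_eq_succ hk hkm ha' hb' (by omega) (by omega)]
  ring

lemma betaD_eq_neg_betaD_zMap (hk : 2 ≤ k) (hkm : k ≤ m) {v w : Vsp N}
    (hv : v ∈ Esub N (2*m-k-1) (k-1)) (hw : w ∈ Esub N (2*m-k-1) (k-1)) :
    betaD N m k v w = -betaD N (m-2) (k-2) (zMap N v) (zMap N w) := by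
  simp only [betaD, bFormFun, zMap_mul_cD_mul_zMap hk hkm hv hw, Finset.sum_neg_distrib, neg_neg]
  exact (Fintype.sum_equiv (finRotate _) _ _ fun a =>
    Equiv.sum_comp (finRotate _) fun b => v (finRotate _ a) * (cD N m k (finRotate _ a) b * w b)).symm

end ShiftIdentity

theorem statement11_general (m N k : ℕ)
    (hk1 : 3 ≤ k) (hk2 : k ≤ m)
    (U : Submodule ℂ (Vsp N))
    (h1 : Submodule.map (zMap N) U ≤ Esub N (2*m-k-2) (k-2))
    (h2 : IsIsotropic (betaD N (m-2) (k-2)) (Submodule.map (zMap N) U)) :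
    U ≤ Esub N (2*m-k) k ∧ IsIsotropic (betaD N m k) U := by
  have hU : U ≤ Esub N (2*m-k-1) (k-1) := fun u hu => by
    have hsh := mem_Esub_of_zMap_mem (h1 (Submodule.mem_map_of_mem hu))
    rwa [show 2*m-k-2+1 = 2*m-k-1 by omega, show k-2+1 = k-1 by omega] at hsh
  refine ⟨hU.trans (Esub_mono (by omega) (by omega)), fun v hv w hw => ?_⟩
  rw [betaD_eq_neg_betaD_zMap (by omega) hk2 (hU hv) (hU hw),
    h2 _ (Submodule.mem_map_of_mem hv) _ (Submodule.mem_map_of_mem hw), neg_zero]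

/-- If `zU ⊆ E_{n-k-2,k-2}` is isotropic with respect to
`β_D^{n-k-2,k-2}`, then `U ⊆ E_{n-k,k}` is isotropic with respect to `β_D^{n-k,k}`. -/
theorem statement11 (m N k : ℕ) (hm : 3 ≤ m) (hN : m < N)
    (hk1 : 3 ≤ k) (hk2 : k ≤ m) (hkadm : k = m ∨ Odd k)
    (U : Submodule ℂ (Vsp N))
    (h1 : Submodule.map (zMap N) U ≤ Esub N (2*m-k-2) (k-2))
    (h2 : IsIsotropic (betaD N (m-2) (k-2)) (Submodule.map (zMap N) U)) :
    U ≤ Esub N (2*m-k) k ∧ IsIsotropic (betaD N m k) U :=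
  statement11_general m N k hk1 hk2 U h1 h2
end Spr
end
end

section
/- Let k = m, so n = 2k. For every cup diagram a ∈ B^{k,k}: every cup of a connects an odd vertex with an even vertex, and if a has a ray then k is odd and the ray is attached to an odd vertex. Consequently, the involution I_k : (S²)^k → (S²)^k, (x_1,…,x_k) ↦ (-x_1, x_2, -x_3, …, (-1)^k x_k), maps S_a bijectively onto the set S'_a of all (x_1,…,x_k) ∈ (S²)^k satisfying x_i = x_j for every undotted cup {i,j} of a, x_i = -x_j for every dotted cup {i,j}, x_i = -p if i carries a dotted ray, and x_i = p if i carries an undotted ray. In particular I_k(S^{k,k}_D) = ⋃_{a ∈ B^{k,k}} S'_a. -/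
noncomputable section
namespace Spr

/-- The involution `I_k(x_1,…,x_k) = (-x_1, x_2, -x_3, …, (-1)^k x_k)`. -/
def Ik (m : ℕ) (x : Fin m → Sph) : Fin m → Sph :=
  fun i => if Odd (i.val + 1) then -(x i) else x i

/-- The set `S'_a` of Ehrig–Stroppel (their sign convention). -/
def Sa' (m : ℕ) (a : CupDiagram m) : Set (Fin m → Sph) :=
  {x | (∀ i j : Fin m, (i.val+1, j.val+1) ∈ a.cups →
          ((i.val+1, j.val+1) ∉ a.dottedCups → (x i : E3) = (x j : E3)) ∧
          ((i.val+1, j.val+1) ∈ a.dottedCups → (x i : E3) = -(x j : E3))) ∧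
       (∀ i : Fin m, a.HasRay (i.val+1) →
          (i.val+1 ∈ a.dottedRays → (x i : E3) = -pPt) ∧
          (i.val+1 ∉ a.dottedRays → (x i : E3) = pPt))}

/-!
Between the two ends of a cup lie exactly the ends of the cups nested inside it, so every cup
joins vertices of different parity. A diagram with `⌊m/2⌋` cups covers all vertices but at
most one; hence a ray forces `m` odd, is the only ray, and (no cup straddling it) has an even
number of vertices to its left, so it sits at an odd vertex. Consequently `I_k` negates exactly
one end of every cup and negates the ray vertex, which turns the equations defining `S_a` into
those defining `S'_a`; as `I_k` is an involution, it is a bijection `S_a → S'_a`.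
-/

namespace CupDiagram

variable {m : ℕ} (a : CupDiagram m)

def endpoints (s : Finset (ℕ × ℕ)) : Finset ℕ :=
  s.biUnion fun q => {q.1, q.2}

@[simp]
lemma mem_endpoints {s : Finset (ℕ × ℕ)} {l : ℕ} :
    l ∈ endpoints s ↔ ∃ q ∈ s, l = q.1 ∨ l = q.2 := by
  simp [endpoints]

lemma card_endpoints {s : Finset (ℕ × ℕ)} (hs : s ⊆ a.cups) :
    (endpoints s).card = 2 * s.card := by
  rw [endpoints, Finset.card_biUnion, Finset.sum_const_nat (m := 2), mul_comm]
  · intro q hq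
    have := a.cups_valid q (hs hq)
    exact Finset.card_pair (by omega)
  · intro q hq q' hq' hne
    have := a.cups_disjoint q (hs hq) q' (hs hq') hne
    simp only [Finset.disjoint_left, Finset.mem_insert, Finset.mem_singleton]
    intro l hl
    omega

lemma hasRay_iff {v : ℕ} : a.HasRay v ↔ v ∈ Finset.Icc 1 m ∧ v ∉ endpoints a.cups := by
  simp only [HasRay, Finset.mem_Icc, mem_endpoints, not_exists, not_and, not_or]
  tauto

lemma endpoints_subset_Icc (s : Finset (ℕ × ℕ)) (hs : s ⊆ a.cups) :
    endpoints s ⊆ Finset.Icc 1 m := by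
  intro l hl
  obtain ⟨q, hq, hl⟩ := mem_endpoints.mp hl
  have := a.cups_valid q (hs hq)
  simp only [Finset.mem_Icc]
  omega

lemma Ioo_eq_endpoints {p : ℕ × ℕ} (hp : p ∈ a.cups) :
    Finset.Ioo p.1 p.2 = endpoints (a.cups.filter fun q => p.1 < q.1 ∧ q.2 < p.2) := by
  ext l
  simp only [Finset.mem_Ioo, mem_endpoints, Finset.mem_filter]
  constructor
  · rintro ⟨h1, h2⟩
    obtain ⟨q, hq, hl, hq1, hq2⟩ := a.noncrossing p hp l h1 h2
    exact ⟨q, ⟨hq, hq1, hq2⟩, hl⟩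
  · rintro ⟨q, ⟨hq, hq1, hq2⟩, hl⟩
    have := a.cups_valid q hq
    omega

lemma odd_add_of_mem_cups {p : ℕ × ℕ} (hp : p ∈ a.cups) : Odd (p.1 + p.2) := by
  have hcard := congrArg Finset.card (a.Ioo_eq_endpoints hp)
  rw [Nat.card_Ioo, a.card_endpoints (Finset.filter_subset _ _)] at hcard
  have := a.cups_valid p hp
  rw [Nat.odd_iff]
  omega

lemma not_lt_lt_of_hasRay {r : ℕ} (hr : a.HasRay r) {q : ℕ × ℕ} (hq : q ∈ a.cups) :
    ¬(q.1 < r ∧ r < q.2) := by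
  rintro ⟨h1, h2⟩
  obtain ⟨q', hq', hr', -⟩ := a.noncrossing q hq r h1 h2
  have := hr.2.2 q' hq'
  omega

lemma endpoints_cups_subset_erase {r : ℕ} (hr : a.HasRay r) :
    endpoints a.cups ⊆ (Finset.Icc 1 m).erase r := fun _ hl =>
  Finset.mem_erase.mpr
    ⟨fun h => ((a.hasRay_iff).mp hr).2 (h ▸ hl), a.endpoints_subset_Icc _ le_rfl hl⟩

section HalfCups

variable {a}

lemma odd_size_of_hasRay (ha : a.cups.card = m / 2) {r : ℕ} (hr : a.HasRay r) : Odd m := by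
  have hle := Finset.card_le_card (a.endpoints_cups_subset_erase hr)
  rw [a.card_endpoints le_rfl, ha, Finset.card_erase_of_mem ((a.hasRay_iff).mp hr).1,
    Nat.card_Icc] at hle
  have := hr.1
  have := hr.2.1
  rw [Nat.odd_iff]
  omega

lemma endpoints_cups_eq_erase (ha : a.cups.card = m / 2) {r : ℕ} (hr : a.HasRay r) :
    endpoints a.cups = (Finset.Icc 1 m).erase r := by
  refine Finset.eq_of_subset_of_card_le (a.endpoints_cups_subset_erase hr) ?_
  have hodd := Nat.odd_iff.mp (odd_size_of_hasRay ha hr)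
  rw [a.card_endpoints le_rfl, ha, Finset.card_erase_of_mem ((a.hasRay_iff).mp hr).1,
    Nat.card_Icc]
  omega

lemma eq_of_hasRay (ha : a.cups.card = m / 2) {r r' : ℕ} (hr : a.HasRay r)
    (hr' : a.HasRay r') : r' = r := by
  by_contra hne
  have h := (a.hasRay_iff).mp hr'
  exact h.2 (endpoints_cups_eq_erase ha hr ▸ Finset.mem_erase.mpr ⟨hne, h.1⟩)

lemma odd_of_hasRay (ha : a.cups.card = m / 2) {r : ℕ} (hr : a.HasRay r) : Odd r := by
  have hleft : Finset.Icc 1 (r - 1) = endpoints (a.cups.filter fun q => q.2 < r) := by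
    ext l
    simp only [Finset.mem_Icc, mem_endpoints, Finset.mem_filter]
    constructor
    · rintro ⟨h1, h2⟩
      have hl : l ∈ endpoints a.cups := by
        rw [endpoints_cups_eq_erase ha hr, Finset.mem_erase, Finset.mem_Icc]
        have := hr.2.1
        omega
      obtain ⟨q, hq, hl⟩ := mem_endpoints.mp hl
      have := a.cups_valid q hq
      have := hr.2.2 q hq
      have := a.not_lt_lt_of_hasRay hr hq
      exact ⟨q, ⟨hq, by omega⟩, hl⟩
    · rintro ⟨q, ⟨hq, hq2⟩, hl⟩
      have := a.cups_valid q hq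
      omega
  have hcard := congrArg Finset.card hleft
  rw [Nat.card_Icc, a.card_endpoints (Finset.filter_subset _ _)] at hcard
  have := hr.1
  rw [Nat.odd_iff]
  omega

end HalfCups

end CupDiagram

lemma coe_Ik {m : ℕ} (x : Fin m → Sph) (i : Fin m) :
    ((Ik m x i : Sph) : E3) = if Odd (i.val + 1) then -(x i : E3) else x i := by
  unfold Ik
  split_ifs <;> rfl

lemma Ik_Ik {m : ℕ} (x : Fin m → Sph) : Ik m (Ik m x) = x := by
  funext i
  unfold Ik
  split_ifs <;> simp

lemma coe_Ik_eq_iff_of_odd_add {m : ℕ} (x : Fin m → Sph) {i j : Fin m}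
    (h : Odd ((i.val + 1) + (j.val + 1))) :
    (((Ik m x i : Sph) : E3) = Ik m x j ↔ (x i : E3) = -(x j : E3)) ∧
      (((Ik m x i : Sph) : E3) = -(Ik m x j : E3) ↔ (x i : E3) = x j) := by
  rcases Nat.even_or_odd (i.val + 1) with hi | hi
  · have hj : Odd (j.val + 1) := (Nat.odd_add'.mp h).mpr hi
    simp [coe_Ik, Nat.not_odd_iff_even.mpr hi, hj]
  · have hj : ¬Odd (j.val + 1) := Nat.not_odd_iff_even.mpr ((Nat.odd_add.mp h).mp hi)
    simp [coe_Ik, hi, hj, neg_eq_iff_eq_neg]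

lemma Ik_mem_Sa'_iff {m : ℕ} {a : CupDiagram m} (ha : a.cups.card = m / 2)
    {x : Fin m → Sph} : Ik m x ∈ Sa' m a ↔ x ∈ Sa m a := by
  simp only [Sa, Sa', Set.mem_ofPred_eq]
  refine and_congr (forall₂_congr fun i j => forall_congr' fun hij => ?_)
    (forall_congr' fun i => forall_congr' fun hr => ?_)
  · obtain ⟨h1, h2⟩ := coe_Ik_eq_iff_of_odd_add x (a.odd_add_of_mem_cups hij)
    rw [h1, h2]
  · -- the ray is the only one, so it is the rightmost and the `qPt` clause of `Sa` is vacuous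
    have hright : ∀ r, a.HasRay r → r ≤ i.val + 1 := fun r h =>
      (CupDiagram.eq_of_hasRay ha hr h).le
    have hnot : ¬∃ r, a.HasRay r ∧ i.val + 1 < r := fun ⟨r, h, hlt⟩ =>
      (CupDiagram.eq_of_hasRay ha hr h ▸ hlt).false
    simp only [coe_Ik, if_pos (CupDiagram.odd_of_hasRay ha hr), neg_neg, neg_eq_iff_eq_neg,
      imp_iff_right hright, hnot, false_imp_iff, and_true]

lemma Ik_bijOn {m : ℕ} {a : CupDiagram m} (ha : a.cups.card = m / 2) :
    Set.BijOn (Ik m) (Sa m a) (Sa' m a) :=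
  Set.InvOn.bijOn ⟨fun x _ => Ik_Ik x, fun x _ => Ik_Ik x⟩
    (fun _ hx => (Ik_mem_Sa'_iff ha).mpr hx)
    (fun y hy => (Ik_mem_Sa'_iff ha).mp (by rwa [Ik_Ik]))

theorem statement19_general (m : ℕ) (a : CupDiagram m) (ha : a.cups.card = m / 2) :
    (∀ p ∈ a.cups, (Odd p.1 ∧ Even p.2) ∨ (Even p.1 ∧ Odd p.2)) ∧
    (∀ r, a.HasRay r → Odd m ∧ Odd r) ∧
    Set.BijOn (Ik m) (Sa m a) (Sa' m a) ∧
    Ik m '' (⋃ a' ∈ {a' : CupDiagram m | a'.cups.card = m / 2}, Sa m a')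
      = ⋃ a' ∈ {a' : CupDiagram m | a'.cups.card = m / 2}, Sa' m a' := by
  refine ⟨fun p hp => ?_, fun r hr => ⟨a.odd_size_of_hasRay ha hr, a.odd_of_hasRay ha hr⟩,
    Ik_bijOn ha, ?_⟩
  · have hodd := a.odd_add_of_mem_cups hp
    rcases Nat.even_or_odd p.1 with h | h
    · exact Or.inr ⟨h, (Nat.odd_add'.mp hodd).mpr h⟩
    · exact Or.inl ⟨h, (Nat.odd_add.mp hodd).mp h⟩
  · rw [Set.image_iUnion₂]
    exact Set.iUnion₂_congr fun a' ha' => (Ik_bijOn ha').image_eq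

/-- For `k = m` every cup of a cup diagram `a ∈ B^{k,k}` connects an odd
and an even vertex, a ray (if any) sits at an odd vertex and forces `k` odd, and the
involution `I_k` maps `S_a` bijectively onto `S'_a`; in particular
`I_k(S^{k,k}_D) = ⋃_a S'_a`. -/
theorem statement19 (m : ℕ) (hm : 1 ≤ m) (a : CupDiagram m) (ha : a.cups.card = m / 2) :
    (∀ p ∈ a.cups, (Odd p.1 ∧ Even p.2) ∨ (Even p.1 ∧ Odd p.2)) ∧
    (∀ r, a.HasRay r → Odd m ∧ Odd r) ∧
    Set.BijOn (Ik m) (Sa m a) (Sa' m a) ∧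
    Ik m '' (⋃ a' ∈ {a' : CupDiagram m | a'.cups.card = m / 2}, Sa m a')
      = ⋃ a' ∈ {a' : CupDiagram m | a'.cups.card = m / 2}, Sa' m a' :=
  statement19_general m a ha

end Spr
end
end
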